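/- arXiv:1712.01952 — 2 statements merged into one kernel-verified Lean document; each statement's English description precedes it below -/
import Mathlib

section
/- For every monic real polynomial P of degree d > 0 and every 1 ≤ j ≤ d, the virtual root ρ_{d,j}(P) is a real root of P* , the product of all normalized derivatives P^{[i]} = P^{(d−i)}/lcof(P^{(d−i)}) for 0 ≤ i ≤ d−1 (including P itself). Conversely, every real root of P equals ρ_{d,j}(P) for some j. -/
open Polynomial Set

noncomputable def monicPoly (d : ℕ) (c : Fin d → ℝ) : Polynomial ℝ :=
  X ^ d + ∑ i : Fin d, C (c i) * X ^ (i : ℕ)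

noncomputable def dCoeff {d : ℕ} (c : Fin (d + 1) → ℝ) : Fin d → ℝ :=
  fun i => c i.succ * ((i : ℕ) + 1) / (d + 1)

noncomputable def bnd {d : ℕ} (c : Fin d → ℝ) : ℝ := 1 + ⨆ i, |c i|

/-- The point of `[a,b]` where `|P|` attains its minimum. -/
noncomputable def Rmin (a b : ℝ) (P : Polynomial ℝ) : ℝ :=
  if h : a ≤ b then
    (isCompact_Icc.exists_isMinOn (Set.nonempty_Icc.mpr h)
      ((continuous_abs.comp P.continuous).continuousOn)).choose
  else a

/-- The `j`-th virtual root of the monic polynomial with coefficient vector `c`,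
defined inductively as the minimizer of `|P|` between consecutive virtual roots
of `P/d`, infinite endpoints being handled by the Cauchy root bound `bnd`. -/
noncomputable def vroot : (d : ℕ) → ℤ → (Fin d → ℝ) → ℝ
  | 0, _, _ => 0
  | d + 1, j, c =>
    Rmin (if 1 < j then vroot d (j - 1) (dCoeff c) else -(bnd c))
      (if j < (d : ℤ) + 1 then vroot d j (dCoeff c) else bnd c)
      (monicPoly (d + 1) c)

/-- `P*`, the product of all normalized derivatives of `P` (`P` included). -/
noncomputable def Pstar : (d : ℕ) → (Fin d → ℝ) → Polynomial ℝ
  | 0, _ => 1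
  | d + 1, c => monicPoly (d + 1) c * Pstar d (dCoeff c)

lemma eval_monicPoly (d : ℕ) (c : Fin d → ℝ) (x : ℝ) :
    (monicPoly d c).eval x = x ^ d + ∑ i : Fin d, c i * x ^ (i : ℕ) := by
  simp [monicPoly, eval_finset_sum]

lemma abs_le_csupr {d : ℕ} (c : Fin d → ℝ) (i : Fin d) : |c i| ≤ ⨆ i, |c i| :=
  le_ciSup (Set.Finite.bddAbove (Set.finite_range (fun i => |c i|))) i

lemma csupr_nonneg {d : ℕ} (c : Fin d → ℝ) : 0 ≤ ⨆ i, |c i| := by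
  rcases Nat.eq_zero_or_pos d with h | h
  · subst h
    simp [Real.iSup_of_isEmpty]
  · exact le_trans (abs_nonneg _) (abs_le_csupr c ⟨0, h⟩)

lemma one_le_bnd {d : ℕ} (c : Fin d → ℝ) : 1 ≤ bnd c := by
  have := csupr_nonneg c; unfold bnd; linarith

lemma bnd_dCoeff_le {d : ℕ} (c : Fin (d + 1) → ℝ) : bnd (dCoeff c) ≤ bnd c := by
  unfold bnd
  have h : ∀ i : Fin d, |dCoeff c i| ≤ ⨆ i, |c i| := by
    intro i
    refine le_trans ?_ (abs_le_csupr c i.succ)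
    rw [dCoeff, abs_div, abs_mul]
    rw [div_le_iff₀ (by positivity)]
    have h1 : |((i:ℕ):ℝ) + 1| ≤ |((d:ℕ):ℝ) + 1| := by
      rw [abs_of_nonneg (by positivity), abs_of_nonneg (by positivity)]
      have := i.2
      have : ((i:ℕ):ℝ) ≤ (d:ℝ) := by exact_mod_cast this.le
      linarith
    nlinarith [abs_nonneg (c i.succ), abs_nonneg (((i:ℕ):ℝ)+1)]
  rcases Nat.eq_zero_or_pos d with h0 | h0
  · subst h0
    simp only [Real.iSup_of_isEmpty]
    have := csupr_nonneg c; linarith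
  · have h2 : (⨆ i : Fin d, |dCoeff c i|) ≤ ⨆ i, |c i| := by
      haveI : Nonempty (Fin d) := ⟨⟨0, h0⟩⟩
      exact ciSup_le h
    linarith

lemma cauchy_core (M y : ℝ) (hM : 0 ≤ M) (hy : 1 + M ≤ y) (d : ℕ) :
    M * ∑ i ∈ Finset.range d, y ^ i ≤ y ^ d - 1 := by
  have hy1 : (1:ℝ) ≤ y := by linarith
  have hg : (y - 1) * ∑ i ∈ Finset.range d, y ^ i = y ^ d - 1 := by
    have := geom_sum_mul y d
    linarith [this]
  have hs : (0:ℝ) ≤ ∑ i ∈ Finset.range d, y ^ i :=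
    Finset.sum_nonneg fun i _ => pow_nonneg (by linarith) i
  nlinarith

lemma cauchy_pos {d : ℕ} (c : Fin d → ℝ) {x : ℝ} (hx : bnd c ≤ x) :
    1 ≤ (monicPoly d c).eval x := by
  set M := ⨆ i, |c i| with hMdef
  have hM : 0 ≤ M := csupr_nonneg c
  have hx1 : 1 + M ≤ x := hx
  have hx0 : (0:ℝ) ≤ x := by linarith
  rw [eval_monicPoly]
  have hterm : ∀ i : Fin d, -(M * x ^ (i:ℕ)) ≤ c i * x ^ (i:ℕ) := by
    intro i
    have h1 : |c i * x ^ (i:ℕ)| ≤ M * x ^ (i:ℕ) := by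
      rw [abs_mul, abs_of_nonneg (pow_nonneg hx0 _)]
      exact mul_le_mul_of_nonneg_right (abs_le_csupr c i) (pow_nonneg hx0 _)
    linarith [neg_abs_le (c i * x ^ (i:ℕ))]
  have hsum : -(M * ∑ i ∈ Finset.range d, x ^ i) ≤ ∑ i : Fin d, c i * x ^ (i:ℕ) := by
    rw [← Fin.sum_univ_eq_sum_range (fun i => x ^ i) d, Finset.mul_sum, ← Finset.sum_neg_distrib]
    exact Finset.sum_le_sum fun i _ => hterm i
  have := cauchy_core M x hM hx1 d
  linarith

lemma cauchy_neg {d : ℕ} (c : Fin d → ℝ) {x : ℝ} (hx : x ≤ -(bnd c)) :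
    1 ≤ (-1) ^ d * (monicPoly d c).eval x := by
  set M := ⨆ i, |c i| with hMdef
  have hM : 0 ≤ M := csupr_nonneg c
  set y := -x with hy
  have hy1 : 1 + M ≤ y := by simp only [hy]; unfold bnd at hx; linarith
  have hy0 : (0:ℝ) ≤ y := by linarith
  rw [eval_monicPoly, mul_add, Finset.mul_sum]
  have hxy : x = -y := by simp [hy]
  have hlead : (-1:ℝ) ^ d * x ^ d = y ^ d := by
    rw [hxy]; rw [neg_pow]; ring
  have hterm : ∀ i : Fin d, -(M * y ^ (i:ℕ)) ≤ (-1:ℝ) ^ d * (c i * x ^ (i:ℕ)) := by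
    intro i
    have h1 : |(-1:ℝ) ^ d * (c i * x ^ (i:ℕ))| ≤ M * y ^ (i:ℕ) := by
      rw [abs_mul, abs_mul, abs_pow, abs_neg, abs_one, one_pow, one_mul, abs_pow]
      have : |x| = y := by rw [abs_of_nonpos (by linarith : x ≤ 0)]
      rw [this]
      exact mul_le_mul_of_nonneg_right (abs_le_csupr c i) (pow_nonneg hy0 _)
    linarith [neg_abs_le ((-1:ℝ) ^ d * (c i * x ^ (i:ℕ)))]
  have hsum : -(M * ∑ i ∈ Finset.range d, y ^ i) ≤ ∑ i : Fin d, (-1:ℝ)^d * (c i * x ^ (i:ℕ)) := by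
    rw [← Fin.sum_univ_eq_sum_range (fun i => y ^ i) d, Finset.mul_sum, ← Finset.sum_neg_distrib]
    exact Finset.sum_le_sum fun i _ => hterm i
  have := cauchy_core M y hM hy1 d
  rw [hlead]
  linarith

lemma deriv_monicPoly (d : ℕ) (c : Fin (d + 1) → ℝ) :
    derivative (monicPoly (d + 1) c) = C ((d:ℝ) + 1) * monicPoly d (dCoeff c) := by
  unfold monicPoly
  rw [derivative_add, derivative_X_pow, derivative_sum]
  simp only [derivative_C_mul, derivative_X_pow]
  rw [Fin.sum_univ_succ]
  simp only [Fin.val_zero, Nat.cast_zero, map_zero, zero_mul, mul_zero, add_zero, zero_add]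
  rw [mul_add, Finset.mul_sum]
  congr 1
  · simp only [Nat.add_sub_cancel]
    push_cast
    ring
  · apply Finset.sum_congr rfl
    intro i _
    have h1 : (i.succ : ℕ) - 1 = (i : ℕ) := by simp
    rw [h1]
    have h2 : ((i.succ : ℕ) : ℝ) = (i : ℕ) + 1 := by simp
    rw [h2]
    rw [dCoeff, ← mul_assoc, ← mul_assoc, ← C_mul, ← C_mul]
    congr 2
    have hd : ((d:ℝ) + 1) ≠ 0 := by positivity
    field_simp

lemma Rmin_spec {a b : ℝ} (P : Polynomial ℝ) (h : a ≤ b) :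
    Rmin a b P ∈ Icc a b ∧ ∀ x ∈ Icc a b, |P.eval (Rmin a b P)| ≤ |P.eval x| := by
  rw [Rmin, dif_pos h]
  obtain ⟨hmem, hmin⟩ := (isCompact_Icc.exists_isMinOn (Set.nonempty_Icc.mpr h)
      ((continuous_abs.comp P.continuous).continuousOn)).choose_spec
  refine ⟨hmem, fun x hx => ?_⟩
  exact hmin hx

lemma exists_root_Ioo (R : Polynomial ℝ) {u v : ℝ} (huv : u ≤ v)
    (h : R.eval u * R.eval v < 0) : ∃ z ∈ Ioo u v, R.eval z = 0 := by
  rcases mul_neg_iff.mp h with ⟨hu, hv⟩ | ⟨hu, hv⟩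
  · have : (0:ℝ) ∈ Ioo (R.eval v) (R.eval u) := ⟨hv, hu⟩
    obtain ⟨z, hz, hz0⟩ := intermediate_value_Ioo' huv (R.continuous.continuousOn) this
    exact ⟨z, hz, hz0⟩
  · have : (0:ℝ) ∈ Ioo (R.eval u) (R.eval v) := ⟨hu, hv⟩
    obtain ⟨z, hz, hz0⟩ := intermediate_value_Ioo huv (R.continuous.continuousOn) this
    exact ⟨z, hz, hz0⟩

/-- if `R` has no root on `Ioo a b` then any two values over points of `Icc a b`
(where `R` doesn't vanish) have positive product. -/
lemma sign_const (R : Polynomial ℝ) {a b u v : ℝ}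
    (hne : ∀ x ∈ Ioo a b, R.eval x ≠ 0) (hu : u ∈ Icc a b) (hv : v ∈ Icc a b)
    (hu0 : R.eval u ≠ 0) (hv0 : R.eval v ≠ 0) : 0 < R.eval u * R.eval v := by
  rcases le_total u v with huv | huv
  · by_contra hc
    have h : R.eval u * R.eval v < 0 :=
      lt_of_le_of_ne (not_lt.mp hc) (mul_ne_zero hu0 hv0)
    obtain ⟨z, hz, hz0⟩ := exists_root_Ioo R huv h
    exact hne z ⟨lt_of_le_of_lt hu.1 hz.1, lt_of_lt_of_le hz.2 hv.2⟩ hz0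
  · by_contra hc
    have h : R.eval v * R.eval u < 0 := by
      have h' : R.eval u * R.eval v < 0 :=
        lt_of_le_of_ne (not_lt.mp hc) (mul_ne_zero hu0 hv0)
      linarith [mul_comm (R.eval u) (R.eval v)]
    obtain ⟨z, hz, hz0⟩ := exists_root_Ioo R huv h
    exact hne z ⟨lt_of_le_of_lt hv.1 hz.1, lt_of_lt_of_le hz.2 hu.2⟩ hz0

lemma strictMonoOn_eval {P : Polynomial ℝ} {a b : ℝ}
    (h : ∀ x ∈ Ioo a b, 0 < (derivative P).eval x) :
    StrictMonoOn (fun x => P.eval x) (Icc a b) := by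
  apply strictMonoOn_of_deriv_pos (convex_Icc a b) (P.continuous.continuousOn)
  intro x hx
  rw [interior_Icc] at hx
  rw [Polynomial.deriv]
  exact h x hx

lemma min_endpoint {f : ℝ → ℝ} {a b m : ℝ} (hab : a ≤ b)
    (hmono : StrictMonoOn f (Icc a b)) (hcont : ContinuousOn f (Icc a b))
    (hm : m ∈ Icc a b) (hmin : ∀ x ∈ Icc a b, |f m| ≤ |f x|) :
    f m = 0 ∨ (0 < f a ∧ m = a) ∨ (f b < 0 ∧ m = b) := by
  have ha : a ∈ Icc a b := ⟨le_refl a, hab⟩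
  have hb : b ∈ Icc a b := ⟨hab, le_refl b⟩
  by_cases hr : ∃ x ∈ Icc a b, f x = 0
  · obtain ⟨x, hx, hfx⟩ := hr
    left
    have := hmin x hx
    rw [hfx, abs_zero] at this
    exact abs_eq_zero.mp (le_antisymm this (abs_nonneg _))
  · push_neg at hr
    rcases lt_trichotomy (f a) 0 with hfa | hfa | hfa
    · rcases lt_trichotomy (f b) 0 with hfb | hfb | hfb
      · -- all values negative, min at b
        right; right
        refine ⟨hfb, ?_⟩
        have hle : ∀ x ∈ Icc a b, f x ≤ f b := fun x hx =>
          hmono.monotoneOn hx hb hx.2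
        have h1 : |f m| ≤ |f b| := hmin b hb
        have h2 : f m ≤ f b := hle m hm
        rw [abs_of_neg hfb, abs_of_neg (lt_of_le_of_lt h2 hfb)] at h1
        exact hmono.injOn hm hb (by linarith)
      · exact absurd hfb (hr b hb)
      · -- sign change: root exists
        exfalso
        have : (0:ℝ) ∈ Ioo (f a) (f b) := ⟨hfa, hfb⟩
        obtain ⟨z, hz, hz0⟩ := intermediate_value_Ioo hab hcont this
        exact hr z ⟨hz.1.le, hz.2.le⟩ hz0
    · exact absurd hfa (hr a ha)
    · -- f a > 0 : min at a
      right; left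
      refine ⟨hfa, ?_⟩
      have hge : ∀ x ∈ Icc a b, f a ≤ f x := fun x hx =>
        hmono.monotoneOn ha hx hx.1
      have h1 : |f m| ≤ |f a| := hmin a ha
      have h2 : f a ≤ f m := hge m hm
      rw [abs_of_pos hfa, abs_of_pos (lt_of_lt_of_le hfa h2)] at h1
      exact hmono.injOn hm ha (by linarith)

lemma vroot_succ (d : ℕ) (j : ℤ) (c : Fin (d+1) → ℝ) :
    vroot (d+1) j c = Rmin (if 1 < j then vroot d (j - 1) (dCoeff c) else -(bnd c))
      (if j < (d : ℤ) + 1 then vroot d j (dCoeff c) else bnd c)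
      (monicPoly (d + 1) c) := rfl

lemma Pstar_succ (d : ℕ) (c : Fin (d+1) → ℝ) :
    Pstar (d+1) c = monicPoly (d+1) c * Pstar d (dCoeff c) := rfl

lemma main_lemma : ∀ (d : ℕ) (c : Fin d → ℝ),
    (∀ j : ℤ, 1 ≤ j → j ≤ (d:ℤ) → -(bnd c) ≤ vroot d j c ∧ vroot d j c ≤ bnd c) ∧
    (∀ j k : ℤ, 1 ≤ j → j ≤ k → k ≤ (d:ℤ) → vroot d j c ≤ vroot d k c) ∧
    (∀ j : ℤ, 1 ≤ j → j ≤ (d:ℤ) → (Pstar d c).eval (vroot d j c) = 0) ∧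
    (∀ x : ℝ, (monicPoly d c).eval x = 0 → ∃ j : ℤ, 1 ≤ j ∧ j ≤ (d:ℤ) ∧ vroot d j c = x) := by
  intro d
  induction d with
  | zero =>
    intro c
    refine ⟨fun j h1 h2 => absurd h2 (by omega), fun j k h1 h2 h3 => absurd h3 (by omega),
      fun j h1 h2 => absurd h2 (by omega), fun x hx => ?_⟩
    rw [eval_monicPoly] at hx
    simp at hx
  | succ e IH =>
    intro c
    obtain ⟨Hb, Hs, H1, H2⟩ := IH (dCoeff c)
    set c' := dCoeff c with hc'
    set Q := monicPoly e c' with hQdef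
    set P := monicPoly (e+1) c with hPdef
    have hbnd' : bnd c' ≤ bnd c := bnd_dCoeff_le c
    have hbnd1 : (1:ℝ) ≤ bnd c := one_le_bnd c
    set la : ℤ → ℝ := fun j => if 1 < j then vroot e (j - 1) c' else -(bnd c) with hla
    set hb : ℤ → ℝ := fun j => if j < (e:ℤ) + 1 then vroot e j c' else bnd c with hhb
    have hvr : ∀ j : ℤ, vroot (e+1) j c = Rmin (la j) (hb j) P := by
      intro j; rw [vroot_succ]
    have hlaB : ∀ j : ℤ, 1 ≤ j → j ≤ (e:ℤ) + 1 → -(bnd c) ≤ la j ∧ la j ≤ bnd c := by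
      intro j h1 h2
      by_cases h : 1 < j
      · simp only [hla, if_pos h]
        have := Hb (j-1) (by omega) (by omega)
        constructor <;> linarith [this.1, this.2]
      · simp only [hla, if_neg h]
        constructor <;> linarith
    have hhbB : ∀ j : ℤ, 1 ≤ j → j ≤ (e:ℤ) + 1 → -(bnd c) ≤ hb j ∧ hb j ≤ bnd c := by
      intro j h1 h2
      by_cases h : j < (e:ℤ) + 1
      · simp only [hhb, if_pos h]
        have := Hb j h1 (by omega)
        constructor <;> linarith [this.1, this.2]
      · simp only [hhb, if_neg h]
        constructor <;> linarith
    have hlahb : ∀ j : ℤ, 1 ≤ j → j ≤ (e:ℤ) + 1 → la j ≤ hb j := by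
      intro j h1 h2
      by_cases hj1 : 1 < j
      · by_cases hj2 : j < (e:ℤ) + 1
        · simp only [hla, hhb, if_pos hj1, if_pos hj2]
          exact Hs (j-1) j (by omega) (by omega) (by omega)
        · simp only [hla, hhb, if_pos hj1, if_neg hj2]
          have := Hb (j-1) (by omega) (by omega)
          linarith [this.2]
      · have h0 : la j = -(bnd c) := by simp only [hla, if_neg hj1]
        rw [h0]
        exact (hhbB j h1 h2).1
    have hmem : ∀ j : ℤ, 1 ≤ j → j ≤ (e:ℤ) + 1 → vroot (e+1) j c ∈ Icc (la j) (hb j) ∧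
        ∀ x ∈ Icc (la j) (hb j), |P.eval (vroot (e+1) j c)| ≤ |P.eval x| := by
      intro j h1 h2
      rw [hvr j]
      exact Rmin_spec P (hlahb j h1 h2)
    have B : ∀ j : ℤ, 1 ≤ j → j ≤ (e:ℤ)+1 →
        -(bnd c) ≤ vroot (e+1) j c ∧ vroot (e+1) j c ≤ bnd c := by
      intro j h1 h2
      obtain ⟨hm, -⟩ := hmem j h1 h2
      exact ⟨le_trans (hlaB j h1 h2).1 hm.1, le_trans hm.2 (hhbB j h1 h2).2⟩
    have Scons : ∀ j : ℤ, 1 ≤ j → j + 1 ≤ (e:ℤ)+1 →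
        vroot (e+1) j c ≤ vroot (e+1) (j+1) c := by
      intro j h1 h2
      have hm1 := (hmem j h1 (by omega)).1
      have hm2 := (hmem (j+1) (by omega) h2).1
      have heq : hb j = la (j+1) := by
        simp only [hla, hhb, if_pos (by omega : 1 < j+1), if_pos (by omega : j < (e:ℤ)+1)]
        norm_num
      calc vroot (e+1) j c ≤ hb j := hm1.2
        _ = la (j+1) := heq
        _ ≤ vroot (e+1) (j+1) c := hm2.1
    have S : ∀ j k : ℤ, 1 ≤ j → j ≤ k → k ≤ (e:ℤ)+1 →
        vroot (e+1) j c ≤ vroot (e+1) k c := by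
      intro j k h1 h2 h3
      obtain ⟨n, rfl⟩ : ∃ n : ℕ, k = j + n := ⟨(k - j).toNat, by omega⟩
      clear h2
      induction n with
      | zero => simp
      | succ n ih =>
        have hcast : ((n+1 : ℕ) : ℤ) = (n : ℤ) + 1 := by push_cast; ring
        rw [hcast] at h3 ⊢
        rw [← add_assoc]
        exact le_trans (ih (by omega)) (Scons (j + (n:ℤ)) (by omega) (by omega))
    have hQne : ∀ j : ℤ, 1 ≤ j → j ≤ (e:ℤ)+1 → ∀ x ∈ Ioo (la j) (hb j), Q.eval x ≠ 0 := by
      intro j h1 h2 x hx hx0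
      obtain ⟨k, hk1, hk2, hk3⟩ := H2 x hx0
      rcases le_or_gt k (j-1) with hkj | hkj
      · have hj1 : 1 < j := by omega
        have hle : vroot e k c' ≤ vroot e (j-1) c' := Hs k (j-1) hk1 hkj (by omega)
        rw [hk3] at hle
        have hlaj : la j = vroot e (j-1) c' := by simp only [hla, if_pos hj1]
        rw [hlaj] at hx
        linarith [hx.1]
      · have hj2 : j < (e:ℤ)+1 := by omega
        have hle : vroot e j c' ≤ vroot e k c' := Hs j k h1 (by omega) hk2
        rw [hk3] at hle
        have hhbj : hb j = vroot e j c' := by simp only [hhb, if_pos hj2]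
        rw [hhbj] at hx
        linarith [hx.2]
    have hD : ∀ x : ℝ, (derivative P).eval x = ((e:ℝ)+1) * Q.eval x := by
      intro x
      rw [hPdef, deriv_monicPoly, eval_mul, eval_C, ← hc', ← hQdef]
    -- injectivity of P on nondegenerate intervals
    have hINJ : ∀ j : ℤ, 1 ≤ j → j ≤ (e:ℤ)+1 → la j < hb j →
        ∀ x ∈ Icc (la j) (hb j), ∀ y ∈ Icc (la j) (hb j), P.eval x = P.eval y → x = y := by
      intro j h1 h2 hab x hxI y hyI hxy
      have htI : (la j + hb j)/2 ∈ Ioo (la j) (hb j) := ⟨by linarith, by linarith⟩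
      set t := (la j + hb j)/2 with ht
      have hQt : Q.eval t ≠ 0 := hQne j h1 h2 t htI
      have hQsign : ∀ z ∈ Ioo (la j) (hb j), 0 < Q.eval z * Q.eval t := fun z hz =>
        sign_const Q (hQne j h1 h2) (Ioo_subset_Icc_self hz) (Ioo_subset_Icc_self htI)
          (hQne j h1 h2 z hz) hQt
      rcases lt_or_gt_of_ne hQt with hQt0 | hQt0
      · have hmono : StrictMonoOn (fun z => (-P).eval z) (Icc (la j) (hb j)) := by
          apply strictMonoOn_eval
          intro z hz
          rw [derivative_neg, eval_neg, hD]
          have := hQsign z hz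
          nlinarith
        have : (-P).eval x = (-P).eval y := by rw [eval_neg, eval_neg, hxy]
        exact hmono.injOn hxI hyI this
      · have hmono : StrictMonoOn (fun z => P.eval z) (Icc (la j) (hb j)) := by
          apply strictMonoOn_eval
          intro z hz
          rw [hD]
          have := hQsign z hz
          nlinarith
        exact hmono.injOn hxI hyI hxy
    -- Root1 core
    have R1 : ∀ j : ℤ, 1 ≤ j → j ≤ (e:ℤ)+1 → P.eval (vroot (e+1) j c) = 0 ∨
        ∃ k : ℤ, 1 ≤ k ∧ k ≤ (e:ℤ) ∧ vroot e k c' = vroot (e+1) j c := by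
      intro j h1 h2
      obtain ⟨hmI, hmmin⟩ := hmem j h1 h2
      set m := vroot (e+1) j c with hm
      rcases eq_or_lt_of_le (hlahb j h1 h2) with hab | hab
      · have hma : m = la j := le_antisymm (hab ▸ hmI.2) hmI.1
        by_cases hj1 : 1 < j
        · exact Or.inr ⟨j-1, by omega, by omega, by rw [hma]; simp only [hla, if_pos hj1]⟩
        · by_cases hj2 : j < (e:ℤ)+1
          · refine Or.inr ⟨j, h1, by omega, ?_⟩
            rw [hma, hab]
            simp only [hhb, if_pos hj2]
          · exfalso
            have h0 : la j = -(bnd c) := by simp only [hla, if_neg hj1]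
            have h0' : hb j = bnd c := by simp only [hhb, if_neg hj2]
            rw [h0, h0'] at hab
            linarith
      · have htI : (la j + hb j)/2 ∈ Ioo (la j) (hb j) := ⟨by linarith, by linarith⟩
        set t := (la j + hb j)/2 with ht
        have hQt : Q.eval t ≠ 0 := hQne j h1 h2 t htI
        have hQsign : ∀ z ∈ Ioo (la j) (hb j), 0 < Q.eval z * Q.eval t := fun z hz =>
          sign_const Q (hQne j h1 h2) (Ioo_subset_Icc_self hz) (Ioo_subset_Icc_self htI)
            (hQne j h1 h2 z hz) hQt
        -- sign facts at the outer endpoints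
        have hQla : ¬ 1 < j → 1 ≤ (-1:ℝ)^e * Q.eval (la j) := by
          intro hj1
          have h0 : la j = -(bnd c) := by simp only [hla, if_neg hj1]
          apply cauchy_neg
          rw [h0]; linarith
        have hQlaSign : ¬ 1 < j → 0 < Q.eval (la j) * Q.eval t := by
          intro hj1
          have hne0 : Q.eval (la j) ≠ 0 := by
            intro hcon
            have := hQla hj1
            rw [hcon, mul_zero] at this; linarith
          exact sign_const Q (hQne j h1 h2) (left_mem_Icc.mpr hab.le)
            (Ioo_subset_Icc_self htI) hne0 hQt
        have hQhb : ¬ j < (e:ℤ)+1 → 1 ≤ Q.eval (hb j) := by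
          intro hj2
          have h0 : hb j = bnd c := by simp only [hhb, if_neg hj2]
          apply cauchy_pos
          rw [h0]; linarith
        have hPla : ¬ 1 < j → 1 ≤ (-1:ℝ)^(e+1) * P.eval (la j) := by
          intro hj1
          have h0 : la j = -(bnd c) := by simp only [hla, if_neg hj1]
          apply cauchy_neg
          rw [h0]
        have hPhb : ¬ j < (e:ℤ)+1 → 1 ≤ P.eval (hb j) := by
          intro hj2
          have h0 : hb j = bnd c := by simp only [hhb, if_neg hj2]
          apply cauchy_pos
          rw [h0]
        have hs2 : (-1:ℝ)^(e+1) = (-1)^e * (-1) := pow_succ _ _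
        rcases lt_or_gt_of_ne hQt with hQt0 | hQt0
        · -- Q t < 0 : P strictly decreasing
          have hmono : StrictMonoOn (fun z => (-P).eval z) (Icc (la j) (hb j)) := by
            apply strictMonoOn_eval
            intro z hz
            rw [derivative_neg, eval_neg, hD]
            have := hQsign z hz
            nlinarith
          have hmmin' : ∀ x ∈ Icc (la j) (hb j), |(-P).eval m| ≤ |(-P).eval x| := by
            intro x hxI
            rw [eval_neg, eval_neg, abs_neg, abs_neg]
            exact hmmin x hxI
          rcases min_endpoint hab.le hmono ((-P).continuous.continuousOn) hmI hmmin'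
            with h | ⟨hfa, hma⟩ | ⟨hfb, hmb⟩
          · rw [eval_neg, neg_eq_zero] at h
            exact Or.inl h
          · rw [eval_neg, neg_pos] at hfa
            by_cases hj1 : 1 < j
            · exact Or.inr ⟨j-1, by omega, by omega, by rw [hma]; simp only [hla, if_pos hj1]⟩
            · exfalso
              have h1Q := hQla hj1
              have h2Q := hQlaSign hj1
              have h3P := hPla hj1
              rcases Nat.even_or_odd e with he | he
              · rw [he.neg_one_pow] at h1Q
                nlinarith
              · rw [hs2, he.neg_one_pow] at h3P
                nlinarith
          · rw [eval_neg] at hfb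
            have hfb' : 0 < P.eval (hb j) := by linarith
            by_cases hj2 : j < (e:ℤ)+1
            · exact Or.inr ⟨j, h1, by omega, by rw [hmb]; simp only [hhb, if_pos hj2]⟩
            · exfalso
              have h1Q := hQhb hj2
              have h2Q : 0 < Q.eval (hb j) * Q.eval t := by
                refine sign_const Q (hQne j h1 h2) (right_mem_Icc.mpr hab.le)
                  (Ioo_subset_Icc_self htI) ?_ hQt
                intro hcon; rw [hcon] at h1Q; linarith
              nlinarith
        · -- Q t > 0 : P strictly increasing
          have hmono : StrictMonoOn (fun z => P.eval z) (Icc (la j) (hb j)) := by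
            apply strictMonoOn_eval
            intro z hz
            rw [hD]
            have := hQsign z hz
            nlinarith
          rcases min_endpoint hab.le hmono (P.continuous.continuousOn) hmI hmmin
            with h | ⟨hfa, hma⟩ | ⟨hfb, hmb⟩
          · exact Or.inl h
          · by_cases hj1 : 1 < j
            · exact Or.inr ⟨j-1, by omega, by omega, by rw [hma]; simp only [hla, if_pos hj1]⟩
            · exfalso
              have h1Q := hQla hj1
              have h2Q := hQlaSign hj1
              have h3P := hPla hj1
              rcases Nat.even_or_odd e with he | he
              · rw [hs2, he.neg_one_pow] at h3P
                nlinarith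
              · rw [he.neg_one_pow] at h1Q
                nlinarith
          · by_cases hj2 : j < (e:ℤ)+1
            · exact Or.inr ⟨j, h1, by omega, by rw [hmb]; simp only [hhb, if_pos hj2]⟩
            · exfalso
              have h1P := hPhb hj2
              linarith
    -- assemble Root1
    have R1' : ∀ j : ℤ, 1 ≤ j → j ≤ (e:ℤ)+1 → (Pstar (e+1) c).eval (vroot (e+1) j c) = 0 := by
      intro j h1 h2
      rw [Pstar_succ, eval_mul, ← hc', ← hPdef]
      rcases R1 j h1 h2 with h | ⟨k, hk1, hk2, hk3⟩
      · rw [h, zero_mul]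
      · rw [← hk3, H1 k hk1 hk2, mul_zero]
    -- Root2
    have R2 : ∀ x : ℝ, P.eval x = 0 → ∃ j : ℤ, 1 ≤ j ∧ j ≤ (e:ℤ)+1 ∧ vroot (e+1) j c = x := by
      intro x hx
      have hx1 : x < bnd c := by
        by_contra hcon
        push_neg at hcon
        have h := cauchy_pos c hcon
        rw [← hPdef, hx] at h
        linarith
      have hx2 : -(bnd c) < x := by
        by_contra hcon
        push_neg at hcon
        have h := cauchy_neg c hcon
        rw [← hPdef, hx, mul_zero] at h
        linarith
      classical
      have hex : ∃ n : ℕ, x ≤ hb ((n:ℤ) + 1) := by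
        refine ⟨e, ?_⟩
        have heq : hb ((e:ℤ)+1) = bnd c := by
          simp only [hhb]
          rw [if_neg (lt_irrefl _)]
        rw [heq]
        linarith
      set n := Nat.find hex with hn
      have hnspec : x ≤ hb ((n:ℤ)+1) := Nat.find_spec hex
      have hnle : n ≤ e := Nat.find_le (by
        have heq : hb ((e:ℤ)+1) = bnd c := by
          simp only [hhb]
          rw [if_neg (lt_irrefl _)]
        rw [heq]
        linarith)
      set j : ℤ := (n:ℤ) + 1 with hj
      have hj1 : (1:ℤ) ≤ j := by omega
      have hj2 : j ≤ (e:ℤ)+1 := by omega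
      have hlax : la j ≤ x := by
        rcases Nat.eq_zero_or_pos n with h0 | h0
        · have hj1' : ¬ (1:ℤ) < j := by omega
          simp only [hla, if_neg hj1']
          linarith
        · obtain ⟨p, hp⟩ := Nat.exists_eq_succ_of_ne_zero h0.ne'
          have hmin := Nat.find_min hex (show p < Nat.find hex by omega)
          push_neg at hmin
          have hlaeq : la j = hb ((p:ℤ)+1) := by
            simp only [hla, hhb, if_pos (show (1:ℤ) < j by omega),
              if_pos (show (p:ℤ)+1 < (e:ℤ)+1 by omega)]
            congr 1
            omega
          rw [hlaeq]
          linarith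
      have hxhb : x ≤ hb j := hnspec
      refine ⟨j, hj1, hj2, ?_⟩
      obtain ⟨hmI, hmmin⟩ := hmem j hj1 hj2
      set m := vroot (e+1) j c with hm
      rcases eq_or_lt_of_le (hlahb j hj1 hj2) with hab | hab
      · have hxla : x = la j := le_antisymm (show x ≤ la j by rw [hab]; exact hxhb) hlax
        have hma : m = la j := le_antisymm (hab ▸ hmI.2) hmI.1
        rw [hma, hxla]
      · have hxI : x ∈ Icc (la j) (hb j) := ⟨hlax, hxhb⟩
        have hPm : P.eval m = 0 := by
          have h := hmmin x hxI
          rw [hx, abs_zero] at h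
          exact abs_eq_zero.mp (le_antisymm h (abs_nonneg _))
        exact hINJ j hj1 hj2 hab m hmI x hxI (by rw [hPm, hx])
    refine ⟨B, S, R1', R2⟩

/-- every virtual root `ρ_{d,j}(P)` (`1 ≤ j ≤ d`) is a real root
of `P*`, and every real root of `P` is some virtual root `ρ_{d,j}(P)`. -/
theorem vroot_is_root_of_Pstar (d : ℕ) (hd : 0 < d) (c : Fin d → ℝ) :
    (∀ j : ℕ, 1 ≤ j → j ≤ d → (Pstar d c).eval (vroot d (j : ℤ) c) = 0) ∧
    (∀ x : ℝ, (monicPoly d c).eval x = 0 →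
      ∃ j : ℕ, 1 ≤ j ∧ j ≤ d ∧ vroot d (j : ℤ) c = x) := by
  obtain ⟨-, -, H1, H2⟩ := main_lemma d c
  refine ⟨fun j h1 h2 => H1 j (by omega) (by omega), fun x hx => ?_⟩
  obtain ⟨j, hj1, hj2, hj3⟩ := H2 x hx
  refine ⟨j.toNat, by omega, by omega, ?_⟩
  rw [show ((j.toNat : ℕ) : ℤ) = j by omega]
  exact hj3
end

section
/- For every d ≥ 1 and every sign sequence σ of length d−1 with σ_0 = +, there exists a monic real polynomial P of degree d having a real root α such that sign(P^{[i]}(α)) = σ_i for all 1 ≤ i ≤ d−1, i.e. α lies in the open set U_σ(P); consequently there are 2^{d−1} distinct generic Thom's virtual root functions. -/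
open Polynomial Set

def sgn (b : Bool) : ℝ := if b then 1 else -1

lemma coeff_monicPoly (d : ℕ) (c : Fin d → ℝ) (m : ℕ) (h : m < d) :
    (monicPoly d c).coeff m = c ⟨m, h⟩ := by
  unfold monicPoly
  rw [coeff_add, coeff_X_pow, if_neg (by omega), zero_add, finset_sum_coeff]
  rw [Finset.sum_eq_single (⟨m, h⟩ : Fin d)]
  · simp
  · intro b _ hb
    rw [coeff_C_mul, coeff_X_pow, if_neg, mul_zero]
    intro he
    exact hb (Fin.ext he.symm)
  · simp

/-- for every `d ≥ 1` and every sign sequence `σ` of length `d-1`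
(`σ i` standing for `σ_{i+1}`), there is a monic real polynomial `P` of degree
`d` with a real root `α` at which the derivative `P^{(d-i)}` (of degree `i`,
which has positive leading coefficient, hence the same signs as the normalized
derivative `P^{[i]}`) has strict sign `σ_i` for `1 ≤ i ≤ d-1`; i.e. `α` lies in
`U_σ(P)`. -/
theorem exists_root_with_thom_code (d : ℕ) (hd : 1 ≤ d) (σ : Fin (d - 1) → Bool) :
    ∃ (c : Fin d → ℝ) (α : ℝ),
      (monicPoly d c).eval α = 0 ∧
      ∀ i : Fin (d - 1),
        0 < sgn (σ i) *
          (Polynomial.derivative^[d - ((i : ℕ) + 1)] (monicPoly d c)).eval α := by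
  refine ⟨fun j => if h : (j : ℕ) = 0 then 0 else
      sgn (σ ⟨d - (j : ℕ) - 1, by have := j.2; omega⟩), 0, ?_, ?_⟩
  · rw [← coeff_zero_eq_eval_zero, coeff_monicPoly d _ 0 (by omega)]
    simp
  · intro i
    set k := d - ((i : ℕ) + 1) with hk
    have hi := i.2
    have hk1 : 1 ≤ k := by omega
    have hkd : k < d := by omega
    rw [← coeff_zero_eq_eval_zero, coeff_iterate_derivative, zero_add,
      coeff_monicPoly d _ k hkd]
    rw [dif_neg (by simpa using (by omega : ¬ k = 0))]
    have hidx : (⟨d - k - 1, by omega⟩ : Fin (d - 1)) = i := by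
      apply Fin.ext
      simp only
      omega
    rw [hidx]
    have hfac : (0 : ℝ) < (k.descFactorial k : ℝ) := by
      rw [Nat.descFactorial_self]
      exact_mod_cast Nat.factorial_pos k
    have hs : sgn (σ i) * sgn (σ i) = 1 := by
      cases σ i <;> simp [sgn]
    rw [nsmul_eq_mul, ← mul_assoc, mul_comm (sgn (σ i)), mul_assoc, hs, mul_one]
    exact hfac
end
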